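/- arXiv:1804.09701 — 5 statements merged into one kernel-verified Lean document; each statement's English description precedes it below -/
import Mathlib

section
/- Let u, v be nonzero vectors of an n-dimensional vector space V over F_2 with |S_u| = r ≠ s = |S_v|. Then no automorphism g of the non-zero component graph G(V) satisfies g(u) = v. -/
open Finset

/-- Vertices of the non-zero component graph: nonzero vectors of `V = (Fin n → ZMod 2)`. -/
abbrev Vtx (n : ℕ) := {v : Fin n → ZMod 2 // v ≠ 0}

/-- The support (skeleton) of a vector: basis vectors with nonzero coefficient. -/
def supp {n : ℕ} (v : Fin n → ZMod 2) : Finset (Fin n) :=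
  Finset.univ.filter (fun i => v i ≠ 0)

/-- The non-zero component graph of an `n`-dimensional vector space over `F_2`:
two distinct nonzero vectors are adjacent iff their supports intersect. -/
def NZC (n : ℕ) : SimpleGraph (Vtx n) where
  Adj u v := u ≠ v ∧ ∃ i, u.1 i ≠ 0 ∧ v.1 i ≠ 0
  symm := by
    constructor
    rintro u v ⟨h1, i, h2, h3⟩
    exact ⟨h1.symm, i, h3, h2⟩
  loopless := by
    constructor
    rintro u ⟨h, -⟩
    exact h rfl

/-!
An automorphism preserves degrees, hence also degrees in the complement graph. The vertices
non-adjacent to `u` (other than `u` itself) are exactly the nonzero vectors vanishing on `S_u`,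
so `u` has degree `2 ^ (n - |S_u|) - 1` in the complement, which determines `|S_u|`.
-/

instance (n : ℕ) : DecidableRel (NZC n).Adj := fun u v => by
  unfold NZC; infer_instance

theorem card_filter_forall_mem_eq_zero {ι K : Type*} [Fintype ι] [DecidableEq ι] [Fintype K]
    [DecidableEq K] [Zero K] (S : Finset ι) :
    #{w : ι → K | ∀ i ∈ S, w i = 0} = Fintype.card K ^ #Sᶜ := by
  have hpi : ({w : ι → K | ∀ i ∈ S, w i = 0} : Finset _) =
      Fintype.piFinset fun i => if i ∈ S then {0} else univ := by
    ext w
    simp only [mem_filter, mem_univ, true_and, Fintype.mem_piFinset]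
    refine forall_congr' fun i => ?_
    split_ifs <;> simp [*]
  rw [hpi, Fintype.card_piFinset, ← prod_compl_mul_prod S]
  rw [prod_congr rfl fun i hi => by rw [if_neg (mem_compl.1 hi)]]
  simp +contextual

namespace NZC

theorem compl_adj_iff {n : ℕ} {u w : Vtx n} :
    (NZC n)ᶜ.Adj u w ↔ ∀ i ∈ supp u.1, w.1 i = 0 := by
  simp only [SimpleGraph.compl_adj, NZC, supp, mem_filter, mem_univ, true_and]
  constructor
  · rintro ⟨hne, h⟩ i hi
    by_contra hw
    exact h ⟨hne, i, hi, hw⟩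
  · intro h
    refine ⟨?_, fun ⟨_, i, hu, hw⟩ => hw (h i hu)⟩
    rintro rfl
    exact u.2 (funext fun i => by_contra fun hi => hi (h i hi))

theorem degree_compl_eq {n : ℕ} (u : Vtx n) :
    (NZC n)ᶜ.degree u = 2 ^ (n - #(supp u.1)) - 1 := by
  have hvanish : #{w : Fin n → ZMod 2 | ∀ i ∈ supp u.1, w i = 0} = 2 ^ (n - #(supp u.1)) := by
    -- `convert` bridges two `Decidable (∀ i : Fin n, _)` instances that are not reducibly equal
    convert card_filter_forall_mem_eq_zero (K := ZMod 2) (supp u.1)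
    · rw [ZMod.card]
    · rw [card_compl, Fintype.card_fin]
  have e : (NZC n)ᶜ.neighborSet u ≃ {w : Fin n → ZMod 2 // w ≠ 0 ∧ ∀ i ∈ supp u.1, w i = 0} :=
    (Equiv.subtypeEquivRight fun w => compl_adj_iff).trans
      (Equiv.subtypeSubtypeEquivSubtypeInter (· ≠ 0)
        fun w : Fin n → ZMod 2 => ∀ i ∈ supp u.1, w i = 0)
  rw [← SimpleGraph.card_neighborSet_eq_degree, Fintype.card_congr e, Fintype.card_subtype,
    ← filter_filter, filter_ne', filter_erase, card_erase_of_mem (by simp), hvanish]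

end NZC

theorem no_auto_of_card_ne_general (n : ℕ) (u v : Vtx n) (r s : ℕ)
    (hu : (supp u.1).card = r) (hv : (supp v.1).card = s) (hrs : r ≠ s)
    (g : NZC n ≃g NZC n) : g u ≠ v := by
  intro hguv
  have hdeg : (NZC n)ᶜ.degree u = (NZC n)ᶜ.degree v := by
    rw [SimpleGraph.degree_compl, SimpleGraph.degree_compl, ← hguv, g.degree_eq]
  rw [NZC.degree_compl_eq, NZC.degree_compl_eq, hu, hv] at hdeg
  have hr : r ≤ n := hu ▸ card_le_univ (supp u.1) |>.trans_eq (Fintype.card_fin n)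
  have hs : s ≤ n := hv ▸ card_le_univ (supp v.1) |>.trans_eq (Fintype.card_fin n)
  have : n - r = n - s :=
    Nat.pow_right_injective le_rfl (Nat.sub_one_cancel (Nat.two_pow_pos _) (Nat.two_pow_pos _) hdeg)
  omega

/-- Vertices with supports of different sizes cannot be mapped to one another by an
automorphism of the non-zero component graph. -/
theorem no_auto_of_card_ne (n : ℕ) (hn : 3 ≤ n) (u v : Vtx n) (r s : ℕ)
    (hu : (supp u.1).card = r) (hv : (supp v.1).card = s) (hrs : r ≠ s)
    (g : NZC n ≃g NZC n) : g u ≠ v :=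
  no_auto_of_card_ne_general n u v r s hu hv hrs g
end

section
/- Let b_l be a basis vector and let g be an automorphism of G(V) fixing b_l. Then for every vertex u, b_l lies in the support of u if and only if b_l lies in the support of g(u). -/
open Finset

theorem SimpleGraph.Iso.eq_or_adj_fixed_iff {V : Type*} {G : SimpleGraph V} (g : G ≃g G)
    {b : V} (hb : g b = b) (u : V) : g u = b ∨ G.Adj (g u) b ↔ u = b ∨ G.Adj u b := by
  conv_lhs => rw [← hb]
  rw [g.apply_eq_iff_eq, g.map_adj_iff]

lemma mem_supp {n : ℕ} (v : Fin n → ZMod 2) (i : Fin n) : i ∈ supp v ↔ v i ≠ 0 := by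
  simp [supp]

/-- The vertices carrying `b_l` in their support form the closed neighbourhood of `b_l`. -/
lemma mem_supp_iff_eq_or_adj {n : ℕ} {l : Fin n} {bl : Vtx n} (hbl : supp bl.1 = {l})
    (v : Vtx n) : l ∈ supp v.1 ↔ v = bl ∨ (NZC n).Adj v bl := by
  have hbl_apply (i : Fin n) : bl.1 i ≠ 0 ↔ i = l := by rw [← mem_supp, hbl, mem_singleton]
  by_cases hv : v = bl
  · simp [hv, hbl]
  · simp [NZC, hv, hbl_apply, mem_supp]

/-- If an automorphism fixes the basis vector `b_l`, then `b_l` lies in the support of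
`u` iff it lies in the support of `g u`. -/
theorem basis_mem_supp_iff (n : ℕ) (l : Fin n) (bl : Vtx n) (hbl : supp bl.1 = {l})
    (g : NZC n ≃g NZC n) (hg : g bl = bl) (u : Vtx n) :
    l ∈ supp u.1 ↔ l ∈ supp (g u).1 := by
  rw [mem_supp_iff_eq_or_adj hbl, mem_supp_iff_eq_or_adj hbl, g.eq_or_adj_fixed_iff hg]
end

section
/- Let n ≥ 4, let b_l, b_m be distinct basis vectors, and let g be an automorphism of G(V) with g(b_l) = b_m and g(b_m) = b_l. Then g fixes the vertex u whose support is the complement of {b_l, b_m} in the basis (i.e., u = Σ_{i ≠ l,m} b_i). -/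
open Finset

/-!
Among the vertices outside the closed neighbourhoods of `b_l` and `b_m` (the nonzero vectors
vanishing at `l` and `m`), `u` is the only one adjacent to all the others: any other such vertex
misses some coordinate `i ∉ {l, m}`, and then it is not adjacent to `b_i`. An automorphism
swapping `b_l` and `b_m` preserves this set of vertices, hence fixes `u`.
-/

namespace SimpleGraph

variable {V W : Type*} (G : SimpleGraph V) {H : SimpleGraph W}

def outsideClosedNbhd (a : V) : Set V := {x | x ≠ a ∧ ¬G.Adj x a}

def IsDominatingIn (S : Set V) (v : V) : Prop := v ∈ S ∧ ∀ x ∈ S, x ≠ v → G.Adj v x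

variable {G}

theorem Iso.preimage_outsideClosedNbhd (g : G ≃g H) (a : V) :
    g ⁻¹' H.outsideClosedNbhd (g a) = G.outsideClosedNbhd a := by
  ext x
  simp [outsideClosedNbhd, g.map_adj_iff]

theorem Iso.isDominatingIn_apply_iff (g : G ≃g H) {S : Set W} {v : V} :
    H.IsDominatingIn S (g v) ↔ G.IsDominatingIn (g ⁻¹' S) v := by
  simp only [IsDominatingIn, Set.mem_preimage, g.surjective.forall, g.injective.ne_iff,
    g.map_adj_iff]

end SimpleGraph

open SimpleGraph

theorem eq_of_supp_eq {n : ℕ} {v w : Fin n → ZMod 2} (h : supp v = supp w) : v = w := by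
  funext i
  have hi : v i ≠ 0 ↔ w i ≠ 0 := by simpa [supp] using Finset.ext_iff.mp h i
  have determined : ∀ a b : ZMod 2, (a ≠ 0 ↔ b ≠ 0) → a = b := by decide
  exact determined _ _ hi

theorem apply_ne_zero_iff_of_supp_eq {n : ℕ} {v : Fin n → ZMod 2} {s : Finset (Fin n)}
    (h : supp v = s) {i : Fin n} : v i ≠ 0 ↔ i ∈ s := by
  simp [← h, supp]

def basisVtx {n : ℕ} (i : Fin n) : Vtx n := ⟨Pi.single i 1, by simp⟩

theorem supp_basisVtx {n : ℕ} (i : Fin n) : supp (basisVtx i).1 = {i} := by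
  ext j
  simp [supp, basisVtx, Pi.single_apply]

theorem mem_outsideClosedNbhd_iff {n : ℕ} {b x : Vtx n} {l : Fin n} (hb : supp b.1 = {l}) :
    x ∈ (NZC n).outsideClosedNbhd b ↔ x.1 l = 0 := by
  have hb' (i : Fin n) : b.1 i ≠ 0 ↔ i = l := by
    simpa using apply_ne_zero_iff_of_supp_eq hb (i := i)
  constructor
  · rintro ⟨hne, hnadj⟩
    by_contra hx
    exact hnadj ⟨hne, l, hx, (hb' l).mpr rfl⟩
  · intro hx
    refine ⟨fun h => (hb' l).mpr rfl (h ▸ hx), ?_⟩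
    rintro ⟨-, i, hxi, hbi⟩
    exact hxi ((hb' i).mp hbi ▸ hx)

section copair

variable {n : ℕ} {l m : Fin n} {bl bm u : Vtx n}

theorem isDominatingIn_copair (hbl : supp bl.1 = {l}) (hbm : supp bm.1 = {m})
    (hu : supp u.1 = Finset.univ \ {l, m}) :
    (NZC n).IsDominatingIn
      ((NZC n).outsideClosedNbhd bl ∩ (NZC n).outsideClosedNbhd bm) u := by
  have hu' (i : Fin n) : u.1 i = 0 ↔ i = l ∨ i = m := by
    simpa [or_iff_not_and_not] using (apply_ne_zero_iff_of_supp_eq hu (i := i)).not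
  simp only [IsDominatingIn, Set.mem_inter_iff, mem_outsideClosedNbhd_iff hbl,
    mem_outsideClosedNbhd_iff hbm]
  refine ⟨⟨(hu' l).mpr (.inl rfl), (hu' m).mpr (.inr rfl)⟩,
    fun x ⟨hxl, hxm⟩ hxu => ⟨hxu.symm, ?_⟩⟩
  obtain ⟨i, hxi⟩ := Function.ne_iff.mp x.2
  refine ⟨i, fun hui => hxi ?_, hxi⟩
  rcases (hu' i).mp hui with rfl | rfl
  exacts [hxl, hxm]

theorem eq_of_isDominatingIn_copair (hbl : supp bl.1 = {l}) (hbm : supp bm.1 = {m})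
    (hu : supp u.1 = Finset.univ \ {l, m}) {v : Vtx n}
    (hv : (NZC n).IsDominatingIn
      ((NZC n).outsideClosedNbhd bl ∩ (NZC n).outsideClosedNbhd bm) v) : v = u := by
  obtain ⟨⟨hvl, hvm⟩, hdom⟩ := hv
  rw [mem_outsideClosedNbhd_iff hbl] at hvl
  rw [mem_outsideClosedNbhd_iff hbm] at hvm
  -- `v` meets every `b_i` with `i ∉ {l, m}`, being either adjacent or equal to it.
  have hvi (i : Fin n) (hil : i ≠ l) (him : i ≠ m) : v.1 i ≠ 0 := by
    have hei : basisVtx i ∈ (NZC n).outsideClosedNbhd bl ∩ (NZC n).outsideClosedNbhd bm := by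
      simp [mem_outsideClosedNbhd_iff hbl, mem_outsideClosedNbhd_iff hbm, basisVtx,
        hil.symm, him.symm]
    have hv : v ∉ (NZC n).outsideClosedNbhd (basisVtx i) := by
      rintro ⟨hne, hnadj⟩
      exact hnadj (hdom _ hei hne.symm)
    rwa [mem_outsideClosedNbhd_iff (supp_basisVtx i)] at hv
  refine Subtype.ext (eq_of_supp_eq (hu ▸ ?_))
  ext i
  by_cases hil : i = l
  · simp [supp, hil, hvl]
  by_cases him : i = m
  · simp [supp, him, hvm]
  simp [supp, hil, him, hvi i hil him]

end copair

theorem swap_fixes_copair_vertex_general (n : ℕ) (l m : Fin n)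
    (bl bm : Vtx n) (hbl : supp bl.1 = {l}) (hbm : supp bm.1 = {m})
    (g : NZC n ≃g NZC n) (h1 : g bl = bm) (h2 : g bm = bl)
    (u : Vtx n) (hu : supp u.1 = Finset.univ \ {l, m}) : g u = u := by
  set S := (NZC n).outsideClosedNbhd bl ∩ (NZC n).outsideClosedNbhd bm
  have hS : g ⁻¹' S = S := calc
    g ⁻¹' S = g ⁻¹' ((NZC n).outsideClosedNbhd (g bm) ∩ (NZC n).outsideClosedNbhd (g bl)) := by
      rw [h1, h2]
    _ = S := by
      rw [Set.preimage_inter, g.preimage_outsideClosedNbhd, g.preimage_outsideClosedNbhd,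
        Set.inter_comm]
  have hgu : (NZC n).IsDominatingIn S (g u) := by
    rw [g.isDominatingIn_apply_iff, hS]
    exact isDominatingIn_copair hbl hbm hu
  exact eq_of_isDominatingIn_copair hbl hbm hu hgu

/-- If `n ≥ 4` and `g` swaps the basis vectors `b_l, b_m`, then `g` fixes the vertex
whose support is the complement of `{b_l, b_m}` in the basis. -/
theorem swap_fixes_copair_vertex (n : ℕ) (hn : 4 ≤ n) (l m : Fin n) (hlm : l ≠ m)
    (bl bm : Vtx n) (hbl : supp bl.1 = {l}) (hbm : supp bm.1 = {m})
    (g : NZC n ≃g NZC n) (h1 : g bl = bm) (h2 : g bm = bl)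
    (u : Vtx n) (hu : supp u.1 = Finset.univ \ {l, m}) : g u = u :=
  swap_fixes_copair_vertex_general n l m bl bm hbl hbm g h1 h2 u hu
end

section
/- Let n ≥ 4, let b_l, b_m be distinct basis vectors, and let g be an automorphism of G(V) with g(b_l) = b_m and g(b_m) = b_l. If u is the vertex with support equal to the basis minus {b_l} and v is the vertex with support equal to the basis minus {b_m}, then g(u) = v. -/
open Finset

/-! A vertex `w ≠ x` is a non-neighbour of `x` iff `supp w` avoids `supp x`, and every index
outside `supp x` yields such a non-neighbour, the corresponding basis vector. Hence the vertex with
support `basis \ {b}` is the only vertex whose unique non-neighbour is `b`. A graph automorphism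
preserves non-neighbourhoods (it is an automorphism of the complement graph), so `g b_l = b_m`
forces `g u = v`. -/

def SimpleGraph.Iso.compl {V W : Type*} {G : SimpleGraph V} {H : SimpleGraph W} (f : G ≃g H) :
    Gᶜ ≃g Hᶜ :=
  { f.toEquiv with
    map_rel_iff' := by simp [SimpleGraph.compl_adj, f.injective.ne_iff, f.map_adj_iff] }

namespace NZC

variable {n : ℕ}

lemma mem_supp {v : Fin n → ZMod 2} {i : Fin n} : i ∈ supp v ↔ v i ≠ 0 := by
  simp [supp]

lemma supp_injective : Function.Injective (supp (n := n)) := by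
  intro a b h
  funext i
  have hiff : a i ≠ 0 ↔ b i ≠ 0 := by rw [← mem_supp, ← mem_supp, h]
  revert hiff
  generalize a i = x
  generalize b i = y
  revert x y
  decide

lemma supp_nonempty (x : Vtx n) : (supp x.1).Nonempty := by
  obtain ⟨i, hi⟩ := Function.ne_iff.mp x.2
  exact ⟨i, mem_supp.2 hi⟩

def single (i : Fin n) : Vtx n :=
  ⟨Pi.single i 1, by simp⟩

lemma supp_single (i : Fin n) : supp (single i).1 = {i} := by
  ext j
  by_cases h : j = i <;> simp [mem_supp, single, h]

lemma compl_adj_iff_s10 {x w : Vtx n} :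
    (NZC n)ᶜ.Adj x w ↔ x ≠ w ∧ Disjoint (supp x.1) (supp w.1) := by
  simp only [SimpleGraph.compl_adj, NZC, Finset.disjoint_left, mem_supp]
  constructor
  · rintro ⟨hxw, hnot⟩
    exact ⟨hxw, fun i hx hw => hnot ⟨hxw, i, hx, hw⟩⟩
  · rintro ⟨hxw, hdisj⟩
    exact ⟨hxw, fun ⟨_, i, hx, hw⟩ => hdisj hx hw⟩

variable {x b : Vtx n} {m : Fin n}

lemma supp_eq_univ_sdiff_of_compl_neighborSet_eq (hb : supp b.1 = {m})
    (hx : (NZC n)ᶜ.neighborSet x = {b}) : supp x.1 = univ \ {m} := by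
  have hm : m ∉ supp x.1 := by
    have hxb : b ∈ (NZC n)ᶜ.neighborSet x := hx ▸ Set.mem_singleton b
    simpa [hb] using (compl_adj_iff_s10.1 hxb).2
  have hout : ∀ i ∉ supp x.1, i = m := by
    intro i hi
    have hxi : single i ∈ (NZC n)ᶜ.neighborSet x := by
      refine compl_adj_iff_s10.2 ⟨fun h => hi ?_, ?_⟩
      · simp [h, supp_single]
      · simpa [supp_single] using hi
    rw [hx, Set.mem_singleton_iff] at hxi
    simpa [supp_single, hb] using congrArg (fun z : Vtx n => supp z.1) hxi
  ext i
  by_cases hi : i ∈ supp x.1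
  · simp [hi, show i ≠ m from fun h => hm (h ▸ hi)]
  · simp [hout i hi, hm]

lemma compl_neighborSet_eq_of_supp_eq_univ_sdiff (hb : supp b.1 = {m})
    (hx : supp x.1 = univ \ {m}) : (NZC n)ᶜ.neighborSet x = {b} := by
  ext w
  simp only [SimpleGraph.mem_neighborSet, compl_adj_iff_s10, Set.mem_singleton_iff, hx]
  constructor
  · rintro ⟨-, hdisj⟩
    have hsub : supp w.1 ⊆ {m} := by
      intro i hi
      by_contra him
      exact Finset.disjoint_left.1 hdisj (by simpa using him) hi
    obtain hw | hw := Finset.subset_singleton_iff.1 hsub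
    · exact absurd hw (supp_nonempty w).ne_empty
    · exact Subtype.ext (supp_injective (hw.trans hb.symm))
  · rintro rfl
    refine ⟨fun h => ?_, by simp [hb]⟩
    have : m ∈ supp x.1 := by rw [h, hb]; exact Finset.mem_singleton_self m
    simp [hx] at this

lemma compl_neighborSet_eq_singleton_iff (hb : supp b.1 = {m}) :
    (NZC n)ᶜ.neighborSet x = {b} ↔ supp x.1 = univ \ {m} :=
  ⟨supp_eq_univ_sdiff_of_compl_neighborSet_eq hb, compl_neighborSet_eq_of_supp_eq_univ_sdiff hb⟩

end NZC

theorem swap_maps_cobasis_general (n : ℕ) (l m : Fin n)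
    (bl bm : Vtx n) (hbl : supp bl.1 = {l}) (hbm : supp bm.1 = {m})
    (g : NZC n ≃g NZC n) (h1 : g bl = bm)
    (u v : Vtx n) (hu : supp u.1 = Finset.univ \ {l})
    (hv : supp v.1 = Finset.univ \ {m}) : g u = v := by
  have hu' : (NZC n)ᶜ.neighborSet u = {bl} := (NZC.compl_neighborSet_eq_singleton_iff hbl).2 hu
  have hgu : (NZC n)ᶜ.neighborSet (g u) = {bm} := by
    rw [← h1, ← Set.image_singleton, ← hu']
    exact g.compl.image_neighborSet.symm
  exact Subtype.ext <| NZC.supp_injective <|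
    ((NZC.compl_neighborSet_eq_singleton_iff hbm).1 hgu).trans hv.symm

/-- If `n ≥ 4` and `g` swaps the basis vectors `b_l, b_m`, then `g` maps the vertex with
support `basis \ {b_l}` to the vertex with support `basis \ {b_m}`. -/
theorem swap_maps_cobasis (n : ℕ) (hn : 4 ≤ n) (l m : Fin n) (hlm : l ≠ m)
    (bl bm : Vtx n) (hbl : supp bl.1 = {l}) (hbm : supp bm.1 = {m})
    (g : NZC n ≃g NZC n) (h1 : g bl = bm) (h2 : g bm = bl)
    (u v : Vtx n) (hu : supp u.1 = Finset.univ \ {l})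
    (hv : supp v.1 = Finset.univ \ {m}) : g u = v :=
  swap_maps_cobasis_general n l m bl bm hbl hbm g h1 u v hu hv
end

section
/- Let u, v be vertices of G(V) with disjoint supports, each of size i'. For 1 ≤ i ≤ n−1, the number of vertices w with |S_w| = i and |S_w ∩ S_u| ≠ |S_w ∩ S_v| equals C(n,i) − Σ_{j,k: i=2j+k, 1≤j≤i', 0≤k≤n−2i'} C(i',j)²·C(n−2i',k) − C(n−2i',i). -/
/-!
A vector over `F_2` is determined by its support, so vertices are the nonempty subsets of the
basis. Let `A`, `B` be the supports of `u`, `v` and `C` the complement of `A ∪ B`, of size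
`n - 2i'`. A set `S` is determined by its traces on `A`, `B`, `C`, so the `i`-sets with
`|S ∩ A| = |S ∩ B| = j` and `|S ∩ C| = k` (forcing `i = 2j + k`) number `C(i',j)² C(n-2i',k)`.
Summed over `j`, they are the `i`-sets not counted, the summand `j = 0` being `C(n-2i',i)`.
-/

open Finset

lemma supp_injective (n : ℕ) : Function.Injective (supp (n := n)) := by
  intro v w h
  funext t
  have ht : v t ≠ 0 ↔ w t ≠ 0 := by simpa [supp] using congrArg (t ∈ ·) h
  revert ht
  generalize v t = a
  generalize w t = b
  decide +revert

lemma supp_surjective (n : ℕ) : Function.Surjective (supp (n := n)) :=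
  fun S => ⟨fun t => if t ∈ S then 1 else 0, by ext t; by_cases t ∈ S <;> simp [supp, *]⟩

lemma supp_zero (n : ℕ) : supp (0 : Fin n → ZMod 2) = ∅ := by
  simp [supp]

lemma supp_eq_empty_iff {n : ℕ} {w : Fin n → ZMod 2} : supp w = ∅ ↔ w = 0 :=
  (supp_injective n).eq_iff' (supp_zero n)

lemma card_filter_vtx_supp {n : ℕ} (p : Finset (Fin n) → Prop) [DecidablePred p] (hp : ¬ p ∅) :
    #{w : Vtx n | p (supp w.1)} = #{S : Finset (Fin n) | p S} := by
  refine card_bij (fun w _ => supp w.1) (by simp)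
    (fun v _ w _ h => Subtype.ext (supp_injective n h)) ?_
  intro S hS
  have hpS := (mem_filter.mp hS).2
  obtain ⟨w, rfl⟩ := supp_surjective n S
  exact ⟨⟨w, fun hw => hp (supp_eq_empty_iff.mpr hw ▸ hpS)⟩, mem_filter.mpr ⟨mem_univ _, hpS⟩, rfl⟩

lemma card_filter_card_eq_and_not {α : Type*} [Fintype α] (i : ℕ) (q : Finset α → Prop)
    [DecidablePred q] :
    #{S : Finset α | #S = i ∧ ¬ q S} =
      (Fintype.card α).choose i - #{S : Finset α | #S = i ∧ q S} := by
  have := card_filter_add_card_filter_not (s := {S : Finset α | #S = i}) q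
  rw [filter_filter, filter_filter, univ_filter_card_eq, card_powersetCard, card_univ] at this
  omega

section
variable {α : Type*} [Fintype α] [DecidableEq α] {A B : Finset α}

lemma card_eq_card_inter_add_card_inter_add_card_inter_compl (hAB : Disjoint A B)
    (S : Finset α) :
    #S = #(S ∩ A) + #(S ∩ B) + #(S ∩ (A ∪ B)ᶜ) := by
  rw [← card_union_of_disjoint (hAB.mono inter_subset_right inter_subset_right),
    ← inter_union_distrib_left, ← sdiff_eq_inter_compl, card_inter_add_card_sdiff]

lemma union_union_inter_eq (hAB : Disjoint A B) {x y z : Finset α} (hx : x ⊆ A) (hy : y ⊆ B)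
    (hz : z ⊆ (A ∪ B)ᶜ) :
    (x ∪ y ∪ z) ∩ A = x ∧ (x ∪ y ∪ z) ∩ B = y ∧ (x ∪ y ∪ z) ∩ (A ∪ B)ᶜ = z := by
  rw [subset_iff] at hx hy hz
  rw [disjoint_left] at hAB
  refine ⟨?_, ?_, ?_⟩ <;> ext t <;> simp only [mem_inter, mem_union, mem_compl] at * <;> grind

lemma card_filter_card_inter_eq (hAB : Disjoint A B) (a b c : ℕ) :
    #{S : Finset α | #(S ∩ A) = a ∧ #(S ∩ B) = b ∧ #(S ∩ (A ∪ B)ᶜ) = c} =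
      (#A).choose a * (#B).choose b * (#(A ∪ B)ᶜ).choose c := by
  rw [← card_powersetCard, ← card_powersetCard, ← card_powersetCard, mul_assoc,
    ← card_product, ← card_product]
  refine card_nbij' (fun S => (S ∩ A, S ∩ B, S ∩ (A ∪ B)ᶜ)) (fun p => p.1 ∪ p.2.1 ∪ p.2.2)
    ?_ ?_ ?_ ?_
  · intro S hS
    simp_all [mem_powersetCard]
  · rintro ⟨x, y, z⟩ h
    simp only [coe_product, Set.mem_prod, mem_coe, mem_powersetCard] at h
    obtain ⟨hA, hB, hC⟩ := union_union_inter_eq hAB h.1.1 h.2.1.1 h.2.2.1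
    simp only [mem_coe, mem_filter, mem_univ, true_and, hA, hB, hC]
    exact ⟨h.1.2, h.2.1.2, h.2.2.2⟩
  · intro S _
    dsimp only
    rw [← inter_union_distrib_left, ← inter_union_distrib_left, union_compl, inter_univ]
  · rintro ⟨x, y, z⟩ h
    simp only [coe_product, Set.mem_prod, mem_coe, mem_powersetCard] at h
    obtain ⟨hA, hB, hC⟩ := union_union_inter_eq hAB h.1.1 h.2.1.1 h.2.2.1
    simp only [hA, hB, hC]

lemma card_filter_card_eq_and_card_inter_eq (hAB : Disjoint A B) (i : ℕ) :
    #{S : Finset α | #S = i ∧ #(S ∩ A) = #(S ∩ B)} =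
      ∑ j ∈ range (#A + 1), ∑ k ∈ range (#(A ∪ B)ᶜ + 1),
        if i = 2 * j + k then (#A).choose j * (#B).choose j * (#(A ∪ B)ᶜ).choose k else 0 := by
  rw [card_eq_sum_card_fiberwise (f := fun S => (#(S ∩ A), #(S ∩ (A ∪ B)ᶜ)))
    (t := range (#A + 1) ×ˢ range (#(A ∪ B)ᶜ + 1)), sum_product]
  · refine sum_congr rfl fun j _ => sum_congr rfl fun k _ => ?_
    rw [filter_filter]
    split_ifs with hi
    · rw [← card_filter_card_inter_eq hAB]
      congr 1
      refine filter_congr fun S _ => ?_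
      have := card_eq_card_inter_add_card_inter_add_card_inter_compl hAB S
      simp only [Prod.mk.injEq]
      omega
    · refine card_eq_zero.mpr (filter_eq_empty_iff.mpr fun S _ => ?_)
      have := card_eq_card_inter_add_card_inter_add_card_inter_compl hAB S
      simp only [Prod.mk.injEq]
      omega
  · intro S _
    simp only [coe_product, Set.mem_prod, coe_range, Set.mem_Iio]
    exact ⟨Nat.lt_succ_of_le (card_le_card inter_subset_right),
      Nat.lt_succ_of_le (card_le_card inter_subset_right)⟩

end

theorem fix_count_general (n i' i : ℕ) (u v : Vtx n)
    (hd : Disjoint (supp u.1) (supp v.1))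
    (hu : (supp u.1).card = i') (hv : (supp v.1).card = i') :
    (Finset.univ.filter (fun w : Vtx n => (supp w.1).card = i ∧
        (supp w.1 ∩ supp u.1).card ≠ (supp w.1 ∩ supp v.1).card)).card =
      n.choose i -
        (∑ j ∈ Finset.Icc 1 i', ∑ k ∈ Finset.range (n - 2 * i' + 1),
          if i = 2 * j + k then (i'.choose j) ^ 2 * ((n - 2 * i').choose k) else 0) -
        (n - 2 * i').choose i := by
  set A := supp u.1
  set B := supp v.1
  have hC : #(A ∪ B)ᶜ = n - 2 * i' := by
    rw [card_compl, card_union_of_disjoint hd, hu, hv, Fintype.card_fin]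
    omega
  rw [card_filter_vtx_supp (fun S => #S = i ∧ #(S ∩ A) ≠ #(S ∩ B)) (by simp),
    card_filter_card_eq_and_not, Fintype.card_fin, card_filter_card_eq_and_card_inter_eq hd,
    hu, hv, hC, range_eq_Ico, sum_eq_sum_Ico_succ_bot (Nat.succ_pos i'), Nat.sub_sub, add_comm]
  congr 2
  · simp only [zero_add, Nat.succ_eq_add_one, Finset.Ico_add_one_right_eq_Icc, sq]
  · simp only [mul_zero, zero_add, Nat.choose_zero_right, one_mul, sum_ite_eq, mem_range]
    split_ifs with hi
    · rfl
    · exact (Nat.choose_eq_zero_of_lt (by omega)).symm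

/-- Counting the vertices of `T_i` in the fixing neighborhood of a pair of vertices
with disjoint supports each of size `i'`. -/
theorem fix_count (n i' i : ℕ) (hn : 3 ≤ n) (u v : Vtx n)
    (hd : Disjoint (supp u.1) (supp v.1))
    (hu : (supp u.1).card = i') (hv : (supp v.1).card = i')
    (hi1 : 1 ≤ i) (hi2 : i ≤ n - 1) :
    (Finset.univ.filter (fun w : Vtx n => (supp w.1).card = i ∧
        (supp w.1 ∩ supp u.1).card ≠ (supp w.1 ∩ supp v.1).card)).card =
      n.choose i -
        (∑ j ∈ Finset.Icc 1 i', ∑ k ∈ Finset.range (n - 2 * i' + 1),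
          if i = 2 * j + k then (i'.choose j) ^ 2 * ((n - 2 * i').choose k) else 0) -
        (n - 2 * i').choose i :=
  fix_count_general n i' i u v hd hu hv
end
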